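/- arXiv:2411.05976 — 4 statements merged into one kernel-verified Lean document; each statement's English description precedes it below -/
import Mathlib

section
/- For positive integers n and r with n ≥ r+1, the alternating sum ∑_{c=r+1}^{n} (-1)^{c+r+1} · C(c-2, r-1) · C(n+1, c+1) equals r(r+1)/2 + (n+1)(n/2 - r). (Equivalently, multiplying by 2: 2·∑_{c=r+1}^{n} (-1)^{c+r+1} C(c-2,r-1) C(n+1,c+1) = r(r+1) + (n+1)(n-2r).) -/
/-!
Write `r = m + 1`, `n = m + N + 1` and `c = m + 2 + i`. The sum becomes `F₂(N + 1)`, where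
`Fₖ(N) = ∑ᵢ (-1)ⁱ C(m+i, m) C(m+N+1, m+i+k+1)`. Pascal's rule in the upper index gives
`Fₖ(N + 1) = Fₖ(N) + Fₖ₋₁(N)`, where `F₋₁(N)` is the binomial inversion sum
`∑ᵢ (-1)ⁱ C(m+i, m) C(m+N+1, m+i) = C(m+N+1, m) ∑ᵢ (-1)ⁱ C(N+1, i) = 0`.
Hence `Fₖ(N) = C(N, k)`, and the sum is `C(n+1-r, 2)`, half of the right-hand side.
-/

open Finset

theorem Int.alternating_sum_range_add_choose_mul_choose (m L : ℕ) :
    ∑ i ∈ Finset.range (L + 1), (-1 : ℤ) ^ i * (m + i).choose m * (m + L).choose (m + i)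
      = if L = 0 then 1 else 0 := by
  have hterm (i : ℕ) : (-1 : ℤ) ^ i * (m + i).choose m * (m + L).choose (m + i)
      = (m + L).choose m * ((-1) ^ i * L.choose i) := by
    have hmul := Nat.choose_mul (n := m + L) (k := m + i) (s := m) (Nat.le_add_right m i)
    rw [Nat.add_sub_cancel_left, Nat.add_sub_cancel_left] at hmul
    have hmulℤ := congrArg (Nat.cast : ℕ → ℤ) hmul
    push_cast at hmulℤ
    linear_combination (-1 : ℤ) ^ i * hmulℤ
  rw [sum_congr rfl fun i _ => hterm i, ← mul_sum, Int.alternating_sum_range_choose]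
  split_ifs with hL <;> simp [hL]

theorem Int.alternating_sum_range_add_choose_mul_choose_add_succ (m N k : ℕ) :
    ∑ i ∈ Finset.range (N + 1),
        (-1 : ℤ) ^ i * (m + i).choose m * (m + N + 1).choose (m + i + k + 1) = N.choose k := by
  induction N generalizing k with
  | zero => cases k <;> simp [Nat.choose_eq_zero_of_lt]
  | succ N ih =>
    have ih_range_succ (k : ℕ) : ∑ i ∈ Finset.range (N + 1 + 1),
        (-1 : ℤ) ^ i * (m + i).choose m * (m + N + 1).choose (m + i + k + 1) = N.choose k := by
      rw [sum_range_succ, ih, Nat.choose_eq_zero_of_lt (by omega : m + N + 1 < m + (N + 1) + k + 1),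
        Nat.cast_zero, mul_zero, add_zero]
    have hpascal (i : ℕ) :
        (-1 : ℤ) ^ i * (m + i).choose m * (m + (N + 1) + 1).choose (m + i + k + 1)
          = (-1 : ℤ) ^ i * (m + i).choose m * (m + (N + 1)).choose (m + i + k)
            + (-1 : ℤ) ^ i * (m + i).choose m * (m + N + 1).choose (m + i + k + 1) := by
      rw [Nat.choose_succ_succ', ← add_assoc]
      push_cast; ring
    rw [sum_congr rfl fun i _ => hpascal i, sum_add_distrib, ih_range_succ]
    cases k with
    | zero =>
      simp only [add_zero, Nat.choose_zero_right]
      rw [Int.alternating_sum_range_add_choose_mul_choose, if_neg N.succ_ne_zero]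
      simp
    | succ k =>
      simp only [← add_assoc]
      rw [ih_range_succ k, Nat.choose_succ_succ']
      push_cast; ring

/-- For positive integers `n ≥ r+1`, the alternating sum
`∑_{c=r+1}^{n} (-1)^{c+r+1} C(c-2, r-1) C(n+1, c+1)` equals
`r(r+1)/2 + (n+1)(n/2 - r)`, stated after multiplying by 2. -/
theorem stmt_0 (n r : ℕ) (hr : 1 ≤ r) (h : r + 1 ≤ n) :
    2 * ∑ c ∈ Finset.Icc (r + 1) n,
        (-1 : ℤ) ^ (c + r + 1) * ((c - 2).choose (r - 1)) * ((n + 1).choose (c + 1))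
      = (r : ℤ) * (r + 1) + ((n : ℤ) + 1) * ((n : ℤ) - 2 * r) := by
  obtain ⟨m, rfl⟩ : ∃ m, r = m + 1 := ⟨r - 1, by omega⟩
  obtain ⟨N, rfl⟩ : ∃ N, n = m + N + 1 := ⟨n - m - 1, by omega⟩
  have hreindex : ∑ c ∈ Icc (m + 1 + 1) (m + N + 1),
      (-1 : ℤ) ^ (c + (m + 1) + 1) * ((c - 2).choose (m + 1 - 1)) *
        ((m + N + 1 + 1).choose (c + 1))
        = ∑ i ∈ range (N + 1 + 1),
          (-1 : ℤ) ^ i * (m + i).choose m * (m + (N + 1) + 1).choose (m + i + 2 + 1) := by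
    rw [sum_range_succ, sum_range_succ,
      Nat.choose_eq_zero_of_lt (by omega : m + (N + 1) + 1 < m + N + 2 + 1),
      Nat.choose_eq_zero_of_lt (by omega : m + (N + 1) + 1 < m + (N + 1) + 2 + 1),
      ← Ico_add_one_right_eq_Icc, sum_Ico_eq_sum_range,
      show m + N + 1 + 1 - (m + 1 + 1) = N by omega]
    simp only [Nat.cast_zero, mul_zero, add_zero]
    refine sum_congr rfl fun i _ => ?_
    rw [show m + 1 + 1 + i - 2 = m + i by omega, Nat.add_sub_cancel,
      show m + 1 + 1 + i + (m + 1) + 1 = i + 2 * (m + 2) by ring, pow_add, pow_mul]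
    ring_nf
  rw [hreindex, Int.alternating_sum_range_add_choose_mul_choose_add_succ]
  have htwo := congrArg (Nat.cast : ℕ → ℤ) (Nat.add_one_mul_choose_eq N 1)
  push_cast [Nat.choose_one_right] at htwo ⊢
  linear_combination -htwo
end

section
/- For positive integers n and r with n ≥ r+2, the alternating sum ∑_{c=r+1}^{n} (-1)^{c+r+1} · C(c-2, r-1) · C(n, c) equals n - r. -/
/-!
Write `F j n = ∑_c (-1)^c C(c - j, k) C(n, c)`. Pascal's rule `C(n+1, c) = C(n, c) + C(n, c-1)`
gives `F (j+1) (n+1) = F (j+1) n - F j n`, and `F 0 n = (-1)^k [n = k]` is the classical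
orthogonality of `(-1)^c C(n, c)` against `C(c, k)`. Solving the recurrence,
`F (j+1) n = (-1)^(k+j+1) C(n-k-1, j)` for `n > k`; the theorem is the case `k = r - 1`, `j = 1`.
-/

open Finset

/-- `altChooseSum k j n = ∑_c (-1)^c C(c - j, k) C(n, c)`, written with `c = d + j` so that no
natural-number subtraction occurs. -/
def altChooseSum (k j n : ℕ) : ℤ :=
  ∑ d ∈ range (n + 1), (-1) ^ (d + j) * (d.choose k : ℤ) * (n.choose (d + j) : ℤ)

lemma altChooseSum_zero_shift (k n : ℕ) :
    altChooseSum k 0 n = if n = k then (-1) ^ k else 0 := by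
  simp only [altChooseSum, add_zero]
  rcases lt_or_ge n k with hnk | hkn
  · rw [if_neg hnk.ne]
    refine sum_eq_zero fun d hd => ?_
    rw [Nat.choose_eq_zero_of_lt (by grind : d < k)]
    simp
  obtain ⟨m, rfl⟩ := Nat.exists_eq_add_of_le hkn
  have hterm : ∀ i, (-1) ^ (k + i) * ((k + i).choose k : ℤ) * ((k + m).choose (k + i) : ℤ)
      = (-1) ^ k * (k + m).choose k * ((-1) ^ i * m.choose i) := by
    intro i
    have h : ((k + m).choose (k + i) : ℤ) * (k + i).choose k = (k + m).choose k * m.choose i := by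
      have := Nat.choose_mul (n := k + m) (k := k + i) (s := k) (by omega)
      rw [Nat.add_sub_cancel_left, Nat.add_sub_cancel_left] at this
      exact_mod_cast this
    rw [pow_add]
    linear_combination (-1 : ℤ) ^ k * (-1) ^ i * h
  rw [show k + m + 1 = k + (m + 1) by omega, sum_range_add,
    sum_eq_zero fun d hd => by rw [Nat.choose_eq_zero_of_lt (mem_range.1 hd)]; simp,
    zero_add, sum_congr rfl fun i _ => hterm i, ← mul_sum, Int.alternating_sum_range_choose]
  split_ifs <;> first | omega | simp_all

lemma altChooseSum_succ_shift_zero (k j : ℕ) : altChooseSum k (j + 1) 0 = 0 := by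
  simp [altChooseSum]

lemma altChooseSum_succ_shift_succ (k j n : ℕ) :
    altChooseSum k (j + 1) (n + 1) = altChooseSum k (j + 1) n - altChooseSum k j n := by
  unfold altChooseSum
  rw [sum_range_succ, Nat.choose_eq_zero_of_lt (by omega : n + 1 < n + 1 + (j + 1)),
    Nat.cast_zero, mul_zero, add_zero, ← sum_sub_distrib]
  refine sum_congr rfl fun d _ => ?_
  rw [show d + (j + 1) = d + j + 1 by omega, Nat.choose_succ_succ', Nat.cast_add, pow_succ]
  ring

lemma altChooseSum_succ_shift (k j n : ℕ) :
    altChooseSum k (j + 1) n =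
      if k < n then (-1) ^ (k + j + 1) * ((n - (k + 1)).choose j : ℤ) else 0 := by
  induction j generalizing n with
  | zero =>
    induction n with
    | zero => simp [altChooseSum_succ_shift_zero]
    | succ n ih =>
      rw [altChooseSum_succ_shift_succ, ih, altChooseSum_zero_shift]
      split_ifs <;> first | omega | simp [pow_succ]
  | succ j ihj =>
    induction n with
    | zero => simp [altChooseSum_succ_shift_zero]
    | succ n ih =>
      rw [altChooseSum_succ_shift_succ, ih, ihj]
      split_ifs
      · rw [show n + 1 - (k + 1) = n - (k + 1) + 1 by omega, Nat.choose_succ_succ', Nat.cast_add,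
          pow_succ]
        ring
      · omega
      · obtain rfl : k = n := by omega
        simp
      · simp

lemma sum_Icc_eq_altChooseSum (k j n : ℕ) :
    ∑ c ∈ Icc (k + j) n, (-1) ^ c * ((c - j).choose k : ℤ) * (n.choose c : ℤ) =
      altChooseSum k j n := by
  refine sum_bij_ne_zero (fun c _ _ => c - j) (fun c hc _ => ?_)
    (fun c₁ hc₁ _ c₂ hc₂ _ h => ?_) (fun d _ hd => ?_) (fun c hc _ => ?_)
  · simp only [mem_Icc, mem_range] at hc ⊢
    omega
  · simp only [mem_Icc] at hc₁ hc₂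
    omega
  · have hkd : k ≤ d := by
      by_contra! h
      simp [Nat.choose_eq_zero_of_lt h] at hd
    have hdn : d + j ≤ n := by
      by_contra! h
      simp [Nat.choose_eq_zero_of_lt h] at hd
    exact ⟨d + j, by simp only [mem_Icc]; omega, by simpa using hd, by simp⟩
  · simp only [mem_Icc] at hc
    rw [Nat.sub_add_cancel (by omega)]

/-- For positive integers `n ≥ r+2`, the alternating sum
`∑_{c=r+1}^{n} (-1)^{c+r+1} C(c-2, r-1) C(n, c)` equals `n - r`. -/
theorem stmt_1 (n r : ℕ) (hr : 1 ≤ r) (h : r + 2 ≤ n) :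
    ∑ c ∈ Finset.Icc (r + 1) n,
        (-1 : ℤ) ^ (c + r + 1) * ((c - 2).choose (r - 1)) * (n.choose c)
      = (n : ℤ) - r := by
  obtain ⟨k, rfl⟩ : ∃ k, r = k + 1 := ⟨r - 1, by omega⟩
  have hterm : ∀ c,
      (-1 : ℤ) ^ (c + (k + 1) + 1) * ((c - 2).choose (k + 1 - 1) : ℤ) * n.choose c =
        (-1) ^ k * ((-1) ^ c * (c - 2).choose k * n.choose c) := fun c => by
    rw [Nat.add_sub_cancel, show c + (k + 1) + 1 = k + c + 2 by ring, pow_add, pow_add, neg_one_sq]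
    ring
  rw [sum_congr rfl fun c _ => hterm c, ← mul_sum, show k + 1 + 1 = k + 2 from rfl,
    sum_Icc_eq_altChooseSum, altChooseSum_succ_shift, if_pos (by omega), Nat.choose_one_right,
    Nat.cast_sub (by omega), ← mul_assoc, ← pow_add, Even.neg_one_pow ⟨k + 1, by ring⟩]
  push_cast
  ring
end

section
/- For integers n ≥ r+1 ≥ 2, one has r - n/2 + (1/(n+1))·∑_{c=r+1}^{n} (-1)^{c+r+1}·C(c-2, r-1)·C(n+1, c+1) = r(r+1)/(2(n+1)), as an identity of rational numbers. -/
/-!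
Since `(1 + x)⁻¹ ^ (k + 1) = ∑ⱼ (-1)ʲ C(k + j, k) xʲ`, comparing coefficients in
`(1 + x) ^ (k + 1 + m) * (1 + x)⁻¹ ^ (k + 1) = (1 + x) ^ m` gives
`∑ⱼ (-1)ʲ C(k + j, k) C(k + 1 + m, k + 1 + i + j) = C(m, i)`; we prove this by induction on `m`
through Pascal's rule. With `r = k + 1`, `n + 1 = k + 1 + m` and `i = 2`, the sum in the theorem is
`C(n + 1 - r, 2)`, and the claim becomes a polynomial identity.
-/

open Finset

theorem alternating_sum_choose_mul_choose_eq_zero (k m : ℕ) :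
    ∑ j ∈ range (m + 2), (-1 : ℤ) ^ j * (k + j).choose k * (k + 1 + m).choose (k + j) = 0 := by
  have hterm (j : ℕ) : (-1 : ℤ) ^ j * (k + j).choose k * (k + 1 + m).choose (k + j) =
      (k + 1 + m).choose k * ((-1) ^ j * (m + 1).choose j) := by
    have h := Nat.choose_mul (n := k + 1 + m) (k := k + j) (s := k) (Nat.le_add_right _ _)
    rw [show k + 1 + m - k = m + 1 by omega, Nat.add_sub_cancel_left] at h
    rw [mul_assoc, ← Nat.cast_mul, mul_comm ((k + j).choose k), h]
    push_cast
    ring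
  simp only [hterm, ← mul_sum, Int.alternating_sum_range_choose_of_ne m.succ_ne_zero, mul_zero]

theorem sum_neg_one_pow_mul_choose_mul_choose (k m i : ℕ) :
    ∑ j ∈ range (m + 1), (-1 : ℤ) ^ j * (k + j).choose k * (k + 1 + m).choose (k + 1 + i + j) =
      m.choose i := by
  induction m generalizing i with
  | zero =>
    cases i <;> simp [Nat.choose_eq_zero_of_lt]
  | succ m ih =>
    have hlast (i : ℕ) : (k + 1 + m).choose (k + 1 + i + (m + 1)) = 0 :=
      Nat.choose_eq_zero_of_lt (by omega)
    cases i with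
    | zero =>
      have hpascal (j : ℕ) : ((k + 1 + (m + 1)).choose (k + 1 + 0 + j) : ℤ) =
          (k + 1 + m).choose (k + j) + (k + 1 + m).choose (k + 1 + 0 + j) := by
        rw [show k + 1 + (m + 1) = k + 1 + m + 1 by omega, show k + 1 + 0 + j = k + j + 1 by omega,
          Nat.choose_succ_succ']
        push_cast; ring
      simp only [hpascal, mul_add, sum_add_distrib, alternating_sum_choose_mul_choose_eq_zero]
      rw [sum_range_succ, ih, hlast]
      simp
    | succ i =>
      have hpascal (j : ℕ) : ((k + 1 + (m + 1)).choose (k + 1 + (i + 1) + j) : ℤ) =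
          (k + 1 + m).choose (k + 1 + i + j) + (k + 1 + m).choose (k + 1 + (i + 1) + j) := by
        rw [show k + 1 + (m + 1) = k + 1 + m + 1 by omega,
          show k + 1 + (i + 1) + j = k + 1 + i + j + 1 by omega, Nat.choose_succ_succ']
        push_cast; ring
      simp only [hpascal, mul_add, sum_add_distrib]
      rw [sum_range_succ _ (m + 1), sum_range_succ _ (m + 1), ih, ih, hlast, hlast,
        Nat.choose_succ_succ']
      push_cast; ring

/-- For integers `n ≥ r+1 ≥ 2`,
`r - n/2 + (1/(n+1))·∑_{c=r+1}^{n} (-1)^{c+r+1} C(c-2,r-1) C(n+1,c+1) = r(r+1)/(2(n+1))`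
as rational numbers. -/
theorem stmt_6 (n r : ℕ) (hr : 1 ≤ r) (h : r + 1 ≤ n) :
    (r : ℚ) - (n : ℚ) / 2
      + (1 / ((n : ℚ) + 1)) * ∑ c ∈ Finset.Icc (r + 1) n,
          (-1 : ℚ) ^ (c + r + 1) * ((c - 2).choose (r - 1)) * ((n + 1).choose (c + 1))
      = (r : ℚ) * ((r : ℚ) + 1) / (2 * ((n : ℚ) + 1)) := by
  obtain ⟨k, rfl⟩ : ∃ k, r = k + 1 := ⟨r - 1, by omega⟩
  obtain ⟨m, rfl⟩ : ∃ m, n = k + 2 + m := ⟨n - (k + 2), by omega⟩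
  have hsum : ∑ c ∈ Icc (k + 1 + 1) (k + 2 + m),
      (-1 : ℚ) ^ (c + (k + 1) + 1) * ((c - 2).choose (k + 1 - 1)) *
        ((k + 2 + m + 1).choose (c + 1)) = (m + 2).choose 2 := by
    have key := sum_neg_one_pow_mul_choose_mul_choose k (m + 2) 2
    rw [sum_range_succ, sum_range_succ,
      Nat.choose_eq_zero_of_lt (by omega : k + 1 + (m + 2) < k + 1 + 2 + (m + 1)),
      Nat.choose_eq_zero_of_lt (by omega : k + 1 + (m + 2) < k + 1 + 2 + (m + 2))] at key
    simp only [Nat.cast_zero, mul_zero, add_zero] at key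
    rw [← Ico_add_one_right_eq_Icc, sum_Ico_eq_sum_range,
      show k + 2 + m + 1 - (k + 1 + 1) = m + 1 by omega, ← Int.cast_natCast (R := ℚ), ← key]
    push_cast
    refine sum_congr rfl fun j _ => ?_
    rw [show k + 1 + 1 + j + (k + 1) + 1 = j + 2 * (k + 2) by omega, pow_add, pow_mul,
      show k + 1 + 1 + j - 2 = k + j by omega, show k + 2 + m + 1 = k + 1 + (m + 2) by omega,
      show k + 1 + 1 + j + 1 = k + 1 + 2 + j by omega]
    simp
  rw [hsum, Nat.cast_choose_two]
  field_simp
  push_cast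
  ring
end

section
/- Let n ≥ 2, 1 ≤ r ≤ n−1, μ_min < μ_max, μ = (r μ_max + (n−r) μ_min)/n. Then the total integral formula holds: (r − n/2)(μ_max − μ_min)² + (μ_max − μ_min)²·∑_{c=r+1}^{n}(1/(n+1))·C(c−2, r−1)·C(n+1, c+1)·(−1)^{c+r+1} = (μ_max − μ_min)²·r(r+1)/(2(n+1)). -/
open Finset

private lemma lemD (t m : ℕ) :
    ∑ j ∈ range (m+1), (-1:ℤ)^j * ((t+j).choose t) * ((t+m).choose (t+j))
      = if m = 0 then 1 else 0 := by
  have key : ∑ j ∈ range (m+1), (-1:ℤ)^j * ((t+j).choose t) * ((t+m).choose (t+j))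
      = ((t+m).choose t : ℤ) * ∑ j ∈ range (m+1), (-1:ℤ)^j * (m.choose j) := by
    rw [Finset.mul_sum]
    refine Finset.sum_congr rfl fun j hj => ?_
    simp only [mem_range] at hj
    have h1 : (t+m).choose (t+j) * ((t+j).choose t) = (t+m).choose t * (m.choose j) := by
      have h := Nat.choose_mul (n := t+m) (k := t+j) (s := t)
        (by omega)
      simpa using h
    have h2 : ((t+m).choose (t+j) : ℤ) * ((t+j).choose t : ℤ)
        = ((t+m).choose t : ℤ) * (m.choose j : ℤ) := by exact_mod_cast h1
    linear_combination ((-1:ℤ)^j) * h2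
  rw [key, Int.alternating_sum_range_choose]
  rcases eq_or_ne m 0 with h | h <;> simp [h]

private lemma lemR (s k : ℕ) :
    ∑ j ∈ range (k+1), (-1:ℤ)^j * ((s+j).choose s) * ((s+k+1).choose (s+j+1)) = 1 := by
  induction k with
  | zero => simp
  | succ k ih =>
    have split : ∀ j ∈ range (k+2),
        (-1:ℤ)^j * ((s+j).choose s) * ((s+k+2).choose (s+j+1))
          = (-1:ℤ)^j * ((s+j).choose s) * ((s+k+1).choose (s+j))
            + (-1:ℤ)^j * ((s+j).choose s) * ((s+k+1).choose (s+j+1)) := by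
      intro j _
      have : (s+k+2).choose (s+j+1) = (s+k+1).choose (s+j) + (s+k+1).choose (s+j+1) := by
        have := Nat.choose_succ_succ' (s+k+1) (s+j)
        convert this using 2 <;> omega
      rw [this]; push_cast; ring
    show ∑ j ∈ range (k+2), (-1:ℤ)^j * ((s+j).choose s) * ((s+k+2).choose (s+j+1)) = 1
    rw [Finset.sum_congr rfl split, Finset.sum_add_distrib]
    have h1 : ∑ j ∈ range (k+2), (-1:ℤ)^j * ((s+j).choose s) * ((s+k+1).choose (s+j)) = 0 := by
      have := lemD s (k+1)
      simp only [show s+(k+1) = s+k+1 by ring] at this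
      rw [this]; simp
    have h2 : ∑ j ∈ range (k+2), (-1:ℤ)^j * ((s+j).choose s) * ((s+k+1).choose (s+j+1))
        = 1 := by
      rw [Finset.sum_range_succ]
      have hz : (s+k+1).choose (s+(k+1)+1) = 0 :=
        Nat.choose_eq_zero_of_lt (by omega)
      rw [hz, ih]
      simp
    rw [h1, h2]; ring

private lemma lemQ (s k : ℕ) :
    ∑ j ∈ range (k+1), (-1:ℤ)^j * ((s+j).choose s) * ((s+k+2).choose (s+j+2))
      = (k : ℤ) + 1 := by
  induction k with
  | zero => simp
  | succ k ih =>
    have split : ∀ j ∈ range (k+2),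
        (-1:ℤ)^j * ((s+j).choose s) * ((s+k+3).choose (s+j+2))
          = (-1:ℤ)^j * ((s+j).choose s) * ((s+k+2).choose (s+j+1))
            + (-1:ℤ)^j * ((s+j).choose s) * ((s+k+2).choose (s+j+2)) := by
      intro j _
      have : (s+k+3).choose (s+j+2) = (s+k+2).choose (s+j+1) + (s+k+2).choose (s+j+2) := by
        have := Nat.choose_succ_succ' (s+k+2) (s+j+1)
        convert this using 2 <;> omega
      rw [this]; push_cast; ring
    show ∑ j ∈ range (k+2), (-1:ℤ)^j * ((s+j).choose s) * ((s+k+3).choose (s+j+2))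
        = (k:ℤ) + 1 + 1
    rw [Finset.sum_congr rfl split, Finset.sum_add_distrib]
    have h1 : ∑ j ∈ range (k+2), (-1:ℤ)^j * ((s+j).choose s) * ((s+k+2).choose (s+j+1)) = 1 := by
      have := lemR s (k+1)
      simpa [show s+(k+1)+1 = s+k+2 by ring] using this
    have h2 : ∑ j ∈ range (k+2), (-1:ℤ)^j * ((s+j).choose s) * ((s+k+2).choose (s+j+2))
        = (k : ℤ) + 1 := by
      rw [Finset.sum_range_succ]
      have hz : (s+k+2).choose (s+(k+1)+2) = 0 :=
        Nat.choose_eq_zero_of_lt (by omega)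
      rw [hz, ih]
      simp
    rw [h1, h2]; push_cast; ring

private lemma lemP (s m : ℕ) :
    2 * ∑ j ∈ range m, (-1:ℤ)^j * ((s+j).choose s) * ((s+m+2).choose (s+j+3))
      = (m : ℤ) * ((m : ℤ) + 1) := by
  induction m with
  | zero => simp
  | succ m ih =>
    have split : ∀ j ∈ range (m+1),
        (-1:ℤ)^j * ((s+j).choose s) * ((s+(m+1)+2).choose (s+j+3))
          = (-1:ℤ)^j * ((s+j).choose s) * ((s+m+2).choose (s+j+2))
            + (-1:ℤ)^j * ((s+j).choose s) * ((s+m+2).choose (s+j+3)) := by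
      intro j _
      have : (s+(m+1)+2).choose (s+j+3) = (s+m+2).choose (s+j+2) + (s+m+2).choose (s+j+3) := by
        have := Nat.choose_succ_succ' (s+m+2) (s+j+2)
        convert this using 2 <;> omega
      rw [this]; push_cast; ring
    rw [Finset.sum_congr rfl split, Finset.sum_add_distrib]
    have h1 : ∑ j ∈ range (m+1), (-1:ℤ)^j * ((s+j).choose s) * ((s+m+2).choose (s+j+2))
        = (m : ℤ) + 1 := lemQ s m
    have h2 : ∑ j ∈ range (m+1), (-1:ℤ)^j * ((s+j).choose s) * ((s+m+2).choose (s+j+3))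
        = ∑ j ∈ range m, (-1:ℤ)^j * ((s+j).choose s) * ((s+m+2).choose (s+j+3)) := by
      rw [Finset.sum_range_succ]
      have hz : (s+m+2).choose (s+m+3) = 0 := Nat.choose_eq_zero_of_lt (by omega)
      simp [hz]
    rw [h1, h2]
    push_cast
    linarith [ih]

/-- Combining the `c = 0` contribution with the combinatorial identity:
`(r - n/2)(μ_max - μ_min)² + (μ_max - μ_min)²·∑_{c=r+1}^{n}(1/(n+1)) C(c-2,r-1) C(n+1,c+1) (-1)^{c+r+1}
 = (μ_max - μ_min)²·r(r+1)/(2(n+1))`. -/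
theorem stmt_17 (n r : ℕ) (hn : 2 ≤ n) (hr1 : 1 ≤ r) (hr2 : r ≤ n - 1)
    (μmin μmax : ℝ) (hμ : μmin < μmax) :
    ((r : ℝ) - (n : ℝ) / 2) * (μmax - μmin) ^ 2
      + (μmax - μmin) ^ 2 * ∑ c ∈ Finset.Icc (r + 1) n,
          (1 / ((n : ℝ) + 1)) * ((c - 2).choose (r - 1)) * ((n + 1).choose (c + 1)) *
            (-1 : ℝ) ^ (c + r + 1)
      = (μmax - μmin) ^ 2 * ((r : ℝ) * ((r : ℝ) + 1)) / (2 * ((n : ℝ) + 1)) := by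
  obtain ⟨s, rfl⟩ : ∃ s, r = s + 1 := ⟨r - 1, by omega⟩
  obtain ⟨m, rfl⟩ : ∃ m, n = s + 2 + m := ⟨n - s - 2, by omega⟩
  -- reduce the Icc sum to a range sum
  have hIcc : Finset.Icc (s + 1 + 1) (s + 2 + m) = Finset.Ico (s + 2) (s + 2 + m + 1) := by
    rw [Finset.Ico_add_one_right_eq_Icc]
  have key : ∑ c ∈ Finset.Icc (s + 1 + 1) (s + 2 + m),
      (1 / (((s + 2 + m : ℕ) : ℝ) + 1)) * (((c - 2).choose (s + 1 - 1) : ℕ) : ℝ)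
        * (((s + 2 + m + 1).choose (c + 1) : ℕ) : ℝ) * (-1 : ℝ) ^ (c + (s + 1) + 1)
      = (1 / (((s + 2 + m : ℕ) : ℝ) + 1)) * (((m : ℝ) + 1) * ((m : ℝ) + 2) / 2) := by
    rw [hIcc, Finset.sum_Ico_eq_sum_range]
    have hcard : s + 2 + m + 1 - (s + 2) = m + 1 := by omega
    rw [hcard]
    have hterm : ∀ j ∈ range (m + 1),
        (1 / (((s + 2 + m : ℕ) : ℝ) + 1)) * (((s + 2 + j - 2).choose (s + 1 - 1) : ℕ) : ℝ)
          * (((s + 2 + m + 1).choose (s + 2 + j + 1) : ℕ) : ℝ) * (-1 : ℝ) ^ (s + 2 + j + (s + 1) + 1)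
        = (1 / (((s + 2 + m : ℕ) : ℝ) + 1)) *
            ((((s + j).choose s : ℕ) : ℝ) * (((s + (m + 1) + 2).choose (s + j + 3) : ℕ) : ℝ)
              * (-1 : ℝ) ^ j) := by
      intro j _
      have e1 : s + 2 + j - 2 = s + j := by omega
      have e2 : s + 1 - 1 = s := by omega
      have e3 : s + 2 + j + 1 = s + j + 3 := by omega
      have e4 : s + 2 + m + 1 = s + (m + 1) + 2 := by omega
      have e5 : (-1 : ℝ) ^ (s + 2 + j + (s + 1) + 1) = (-1 : ℝ) ^ j := by
        rw [show s + 2 + j + (s + 1) + 1 = 2 * (s + 2) + j by ring, pow_add, pow_mul]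
        norm_num
      rw [e1, e2, e3, e4, e5]; ring
    rw [Finset.sum_congr rfl hterm, ← Finset.mul_sum]
    congr 1
    have hZ := lemP s (m + 1)
    have hR : ∑ j ∈ range (m + 1),
        (((s + j).choose s : ℕ) : ℝ) * (((s + (m + 1) + 2).choose (s + j + 3) : ℕ) : ℝ)
          * (-1 : ℝ) ^ j
        = (((m : ℝ) + 1) * ((m : ℝ) + 2)) / 2 := by
      have hcast := congrArg (fun z : ℤ => (z : ℝ)) hZ
      push_cast at hcast
      have hsums : ∑ j ∈ range (m + 1),
          (((s + j).choose s : ℕ) : ℝ) * (((s + (m + 1) + 2).choose (s + j + 3) : ℕ) : ℝ)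
            * (-1 : ℝ) ^ j
          = ∑ j ∈ range (m + 1),
            (-1 : ℝ) ^ j * (((s + j).choose s : ℕ) : ℝ)
              * (((s + (m + 1) + 2).choose (s + j + 3) : ℕ) : ℝ) := by
        apply Finset.sum_congr rfl; intro j _; ring
      rw [hsums, eq_div_iff (by norm_num : (2:ℝ) ≠ 0)]
      linarith [hcast]
    rw [hR]
  rw [key]
  have hm : ((m : ℝ)) ≥ 0 := by positivity
  have hne : ((s : ℝ) + 2 + (m : ℝ)) + 1 ≠ 0 := by positivity
  push_cast
  push_cast at hne
  field_simp
  ring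
end
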